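/- Let g = (g₁,…,g_m) be a tuple of holomorphic functions on an open set U ⊂ ℂⁿ with δ₀ ≤ |g(z)|² := Σ_k |g_k(z)|² ≤ M for all z ∈ U, where 0 < δ₀ ≤ M, let f be holomorphic on U, and set v_{kμ} := f · ∂(ḡ_k/|g|²)/∂z̄_μ. Then there is a constant C depending only on m, δ₀ and M such that for every z ∈ U, every 1 ≤ k ≤ m, 1 ≤ ν ≤ n, and every ξ ∈ ℂⁿ: | Σ_{μ=1}^n (∂v_{kμ}/∂z_ν)(z) ξ_μ |² ≤ C (|∂f(z)|² + |f(z)|² |∂g(z)|²) Σ_{j=1}^m | Σ_{μ=1}^n (g_j ∂g_k/∂z_μ − g_k ∂g_j/∂z_μ)(z) ξ̄_μ |², where |∂f|² := Σ_μ |∂f/∂z_μ|² and |∂g|² := Σ_k Σ_μ |∂g_k/∂z_μ|². -/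

import Mathlib

open MeasureTheory Filter Complex Set Bornology ENNReal

noncomputable section

/-- ℂⁿ with the Euclidean metric. -/
abbrev Cn (n : ℕ) : Type := EuclideanSpace ℂ (Fin n)


instance {n : ℕ} : MeasurableSpace (Cn n) := borel _
instance {n : ℕ} : BorelSpace (Cn n) := ⟨rfl⟩
instance {n : ℕ} : MeasureSpace (Cn n) :=
  letI : InnerProductSpace ℝ (Cn n) := InnerProductSpace.complexToReal
  measureSpaceOfInnerProductSpace

/-- The `j`-th standard basis vector of ℂⁿ. -/
def sdir {n : ℕ} (j : Fin n) : Cn n := EuclideanSpace.single j 1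

/-- Wirtinger derivative `∂f/∂z_j`. -/
def wder {n : ℕ} (j : Fin n) (f : Cn n → ℂ) (z : Cn n) : ℂ :=
  (fderiv ℝ f z (sdir j) - Complex.I * fderiv ℝ f z (Complex.I • sdir j)) / 2

/-- Conjugate Wirtinger derivative `∂f/∂z̄_j`. -/
def wbar {n : ℕ} (j : Fin n) (f : Cn n → ℂ) (z : Cn n) : ℂ :=
  (fderiv ℝ f z (sdir j) + Complex.I * fderiv ℝ f z (Complex.I • sdir j)) / 2

/-- Complex Hessian `∂²f/∂z_j∂z̄_k`. -/
def hessC {n : ℕ} (j k : Fin n) (f : Cn n → ℂ) (z : Cn n) : ℂ :=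
  wder j (fun w => wbar k f w) z

/-- Levi form `Σ_{j,k} (∂²φ/∂z_j∂z̄_k) ξ_j ξ̄_k` of a real-valued function. -/
def levi {n : ℕ} (φ : Cn n → ℝ) (z : Cn n) (ξ : Fin n → ℂ) : ℝ :=
  (∑ j, ∑ k, hessC j k (fun w => (φ w : ℂ)) z * ξ j * (starRingEnd ℂ) (ξ k)).re

/-- Euclidean Laplacian on ℂⁿ ≅ ℝ^{2n}. -/
def lap {n : ℕ} (φ : Cn n → ℝ) (z : Cn n) : ℝ :=
  ∑ j, (fderiv ℝ (fun w => fderiv ℝ φ w (sdir j)) z (sdir j)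
    + fderiv ℝ (fun w => fderiv ℝ φ w (Complex.I • sdir j)) z (Complex.I • sdir j))

/-- Squared norm of the real gradient `|∇φ|²`. -/
def gradSq {n : ℕ} (φ : Cn n → ℝ) (z : Cn n) : ℝ :=
  ∑ j, ((fderiv ℝ φ z (sdir j)) ^ 2 + (fderiv ℝ φ z (Complex.I • sdir j)) ^ 2)

/-- `ρ` is a `C²` defining function for the bounded open set `Ω ⊂ ℂⁿ`:
`ρ` is real-valued and `C²` on a neighborhood `U` of the closure of `Ω`,
`Ω = {ρ < 0}`, and `∇ρ ≠ 0` on `∂Ω`. -/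
structure IsDefining {n : ℕ} (Ω : Set (Cn n)) (ρ : Cn n → ℝ) : Prop where
  isOpen : IsOpen Ω
  bounded : IsBounded Ω
  exU : ∃ U : Set (Cn n), IsOpen U ∧ closure Ω ⊆ U ∧ ContDiffOn ℝ 2 ρ U ∧
    Ω = {z | z ∈ U ∧ ρ z < 0}
  grad_ne : ∀ z ∈ frontier Ω, fderiv ℝ ρ z ≠ 0

/-- Squared Hardy norm `‖f‖²_{H²(Ω)} = limsup_{ε→0⁺} ∫_{∂Ω_ε} |f|² dσ_ε`,
where `∂Ω_ε` carries the `(2n-1)`-dimensional Hausdorff measure. -/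
def hardySq {n : ℕ} (Ω : Set (Cn n)) (ρ : Cn n → ℝ) (f : Cn n → ℂ) : ℝ≥0∞ :=
  Filter.limsup
    (fun ε : ℝ =>
      ∫⁻ z in frontier {w | w ∈ Ω ∧ ρ w < -ε}, ENNReal.ofReal (‖f z‖ ^ 2)
        ∂ μH[2 * (n : ℝ) - 1])
    (nhdsWithin 0 (Set.Ioi 0))

/-- `f` belongs to the Hardy space `H²(Ω)`. -/
def MemHardy {n : ℕ} (Ω : Set (Cn n)) (ρ : Cn n → ℝ) (f : Cn n → ℂ) : Prop :=
  DifferentiableOn ℂ f Ω ∧ hardySq Ω ρ f < ⊤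

/-- The subdomain `Ω_ε = {z ∈ Ω : ρ(z) < -ε}`. -/
def subdom {n : ℕ} (Ω : Set (Cn n)) (ρ : Cn n → ℝ) (ε : ℝ) : Set (Cn n) :=
  {w | w ∈ Ω ∧ ρ w < -ε}

/-!
Expanding `∂/∂z̄_μ (ḡ_k / |g|²)` and using `Σ_i g_i ḡ_i = |g|²` gives
`v_{kμ} = Σ_i (f g_i / |g|⁴) · conj (g_i ∂_μ g_k - g_k ∂_μ g_i)`: smooth weights times
antiholomorphic factors. So `∂/∂z_ν` only falls on the weights, and
`Σ_μ (∂_ν v_{kμ}) ξ_μ = Σ_i ∂_ν (f g_i / |g|⁴) · conj T_i` with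
`T_i = Σ_μ (g_i ∂_μ g_k - g_k ∂_μ g_i) ξ̄_μ`. Cauchy–Schwarz in `i` and the estimate
`|∂_ν (f g_i / |g|⁴)|² ≤ C₀ (|∂f|² + |f|² |∂g|²)`, which only uses `δ₀ ≤ |g|² ≤ M`, conclude.

Differentiating the antiholomorphic factors needs the derivatives `∂_μ g_k` to be holomorphic.
This follows from the Cauchy formula on complex lines, `∂_v g(w) = (2πi)⁻¹ ∮ g(w + t v) / t² dt`,
differentiated in `w` under the integral sign; the domination comes from the Schwarz lemma.
-/

open Metric Topology Real ComplexConjugate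

section Regularity

variable {E : Type*} [NormedAddCommGroup E] [NormedSpace ℂ E] {U : Set E} {z : E}

theorem add_smul_mem_ball {w v : E} {t : ℂ} {ε : ℝ} (hw : w ∈ ball z (ε / 2))
    (ht : ‖t‖ * ‖v‖ < ε / 2) : w + t • v ∈ ball z ε := by
  rw [mem_ball, dist_eq_norm, add_sub_right_comm]
  calc ‖w - z + t • v‖ ≤ ‖w - z‖ + ‖t‖ * ‖v‖ := (norm_add_le _ _).trans_eq (by rw [norm_smul])
    _ < ε := by linarith [mem_ball_iff_norm.mp hw]

theorem DifferentiableOn.exists_ball_norm_fderiv_le {F : Type*} [NormedAddCommGroup F]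
    [NormedSpace ℂ F] {f : E → F} (hf : DifferentiableOn ℂ f U) (hU : IsOpen U) (hz : z ∈ U) :
    ∃ ε > 0, ball z ε ⊆ U ∧ ∃ C, ∀ x ∈ ball z ε, ‖fderiv ℂ f x‖ ≤ C := by
  have hnear : ∀ᶠ y in 𝓝 z, y ∈ U ∧ ‖f y - f z‖ < 1 :=
    (hU.eventually_mem hz).and ((hf.continuousOn.continuousAt (hU.mem_nhds hz)).eventually
      (eventually_norm_sub_lt (f z) one_pos))
  obtain ⟨δ, hδ, hball⟩ := Metric.eventually_nhds_iff_ball.mp hnear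
  refine ⟨δ / 2, by positivity, fun y hy => (hball y (ball_subset_ball (by linarith) hy)).1,
    2 / (δ / 2), fun x hx => ?_⟩
  have hsub : ball x (δ / 2) ⊆ ball z δ := ball_subset_ball' (by linarith [mem_ball.mp hx])
  -- Schwarz lemma: on `ball x (δ / 2)`, `f` stays within `2` of `f x`.
  refine norm_fderiv_le_div_of_mapsTo_ball (fun y hy => ?_) (fun y hy => ?_) (by positivity)
  · exact (hf.differentiableAt (hU.mem_nhds (hball y (hsub hy)).1)).differentiableWithinAt
  · rw [mem_closedBall, dist_eq_norm]
    linarith [norm_sub_le_norm_sub_add_norm_sub (f y) (f z) (f x), norm_sub_rev (f z) (f x),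
      (hball y (hsub hy)).2, (hball x (hsub (mem_ball_self (by positivity)))).2]

theorem fderiv_apply_eq_circleIntegral {F : Type*} [NormedAddCommGroup F] [NormedSpace ℂ F]
    [CompleteSpace F] {f : E → F} {w v : E} {r : ℝ} (hr : 0 < r)
    (hf : ∀ t ∈ closedBall (0 : ℂ) r, DifferentiableAt ℂ f (w + t • v)) :
    fderiv ℂ f w v = (2 * π * I)⁻¹ • ∮ t in C(0, r), (1 / t ^ 2) • f (w + t • v) := by
  have hline : ∀ t : ℂ, HasDerivAt (fun s : ℂ => w + s • v) v t := fun t => by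
    simpa using ((hasDerivAt_id t).smul_const v).const_add w
  have hslice : DifferentiableOn ℂ (fun t : ℂ => f (w + t • v)) (closedBall 0 r) := fun t ht =>
    ((hf t ht).hasFDerivAt.comp_hasDerivAt t (hline t)).differentiableAt.differentiableWithinAt
  have hderiv : HasDerivAt (fun t : ℂ => f (w + t • v)) (fderiv ℂ f w v) 0 := by
    simpa [Function.comp_def] using
      (hf 0 (mem_closedBall_self hr.le)).hasFDerivAt.comp_hasDerivAt 0 (hline 0)
  have hcauchy := hslice.deriv_eq_smul_circleIntegral hr
  simp only [sub_zero, hderiv.deriv] at hcauchy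
  rw [hcauchy, smul_smul, inv_mul_cancel₀ two_pi_I_ne_zero, one_smul]

variable [FiniteDimensional ℂ E]

theorem differentiableAt_integral_smul_comp_add_smul {f : E → ℂ} {v : E} {ε C a b : ℝ}
    {k γ : ℝ → ℂ} (hf : DifferentiableOn ℂ f (ball z ε))
    (hC : ∀ x ∈ ball z ε, ‖fderiv ℂ f x‖ ≤ C) (hk : Continuous k) (hγ : Continuous γ)
    (hγv : ∀ θ, ‖γ θ‖ * ‖v‖ < ε / 2) :
    DifferentiableAt ℂ (fun w => ∫ θ in a..b, k θ • f (w + γ θ • v)) z := by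
  borelize E
  have hmem : ∀ w ∈ ball z (ε / 2), ∀ θ, w + γ θ • v ∈ ball z ε := fun w hw θ =>
    add_smul_mem_ball hw (hγv θ)
  have hpath : Continuous fun θ => γ θ • v := hγ.smul continuous_const
  have hcont : ∀ w ∈ ball z (ε / 2), Continuous fun θ => k θ • f (w + γ θ • v) := fun w hw =>
    hk.smul (hf.continuousOn.comp_continuous (continuous_const.add hpath) (hmem w hw))
  have hε : 0 < ε := by linarith [hγv 0, mul_nonneg (norm_nonneg (γ 0)) (norm_nonneg v)]
  have hz : z ∈ ball z (ε / 2) := mem_ball_self (by linarith)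
  refine (intervalIntegral.hasFDerivAt_integral_of_dominated_of_fderiv_le
    (s := ball z (ε / 2)) (F' := fun w θ => k θ • fderiv ℂ f (w + γ θ • v))
    (bound := fun θ => ‖k θ‖ * C) (isOpen_ball.mem_nhds hz) ?_ ((hcont z hz).intervalIntegrable _ _) ?_ ?_
    ((hk.norm.mul continuous_const).intervalIntegrable _ _) ?_).differentiableAt
  · filter_upwards [isOpen_ball.mem_nhds hz] with w hw
    exact (hcont w hw).aestronglyMeasurable
  · exact hk.aestronglyMeasurable.smul
      ((measurable_fderiv ℂ f).comp (continuous_const.add hpath).measurable).aestronglyMeasurable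
  · refine Filter.Eventually.of_forall fun θ _ w hw => ?_
    rw [norm_smul]
    exact mul_le_mul_of_nonneg_left (hC _ (hmem w hw θ)) (norm_nonneg _)
  · refine Filter.Eventually.of_forall fun θ _ w hw => ?_
    have hfd := (hf.differentiableAt (isOpen_ball.mem_nhds (hmem w hw θ))).hasFDerivAt
    exact (hfd.comp w ((hasFDerivAt_id w).add_const _)).const_smul (k θ)

theorem DifferentiableOn.differentiableAt_fderiv_apply {f : E → ℂ} (hf : DifferentiableOn ℂ f U)
    (hU : IsOpen U) (hz : z ∈ U) (v : E) : DifferentiableAt ℂ (fun w => fderiv ℂ f w v) z := by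
  obtain ⟨ε, hε, hεU, C, hC⟩ := hf.exists_ball_norm_fderiv_le hU hz
  set r := ε / (2 * (‖v‖ + 1)) with hr_def
  have hr : 0 < r := by positivity
  have hrv : r * ‖v‖ < ε / 2 := by
    rw [hr_def, div_mul_eq_mul_div, div_lt_div_iff₀ (by positivity) two_pos]
    nlinarith [norm_nonneg v]
  have hmem : ∀ w ∈ ball z (ε / 2), ∀ t : ℂ, ‖t‖ ≤ r → w + t • v ∈ ball z ε := fun w hw t ht =>
    add_smul_mem_ball hw ((mul_le_mul_of_nonneg_right ht (norm_nonneg v)).trans_lt hrv)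
  have hrep : ∀ w ∈ ball z (ε / 2), fderiv ℂ f w v = (2 * π * I)⁻¹ •
      ∫ θ in (0)..2 * π, (circleMap 0 r θ * I * (1 / circleMap 0 r θ ^ 2)) •
        f (w + circleMap 0 r θ • v) := by
    intro w hw
    rw [fderiv_apply_eq_circleIntegral hr fun t ht => hf.differentiableAt
      (hU.mem_nhds (hεU (hmem w hw t (mem_closedBall_zero_iff.mp ht)))), circleIntegral]
    simp only [deriv_circleMap, smul_smul]
  have hcircle : ∀ θ, ‖circleMap 0 r θ‖ * ‖v‖ < ε / 2 := fun θ => by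
    rwa [norm_circleMap_zero, abs_of_pos hr]
  refine DifferentiableAt.congr_of_eventuallyEq ?_
    (Filter.eventually_of_mem (isOpen_ball.mem_nhds (mem_ball_self (by positivity))) hrep)
  refine (differentiableAt_integral_smul_comp_add_smul (hf.mono hεU) hC ?_
    (continuous_circleMap 0 r) hcircle).const_smul (2 * π * I)⁻¹
  refine ((continuous_circleMap 0 r).mul continuous_const).mul
    (continuous_const.div ((continuous_circleMap 0 r).pow 2) fun θ => ?_)
  exact pow_ne_zero _ (circleMap_ne_center hr.ne')

end Regularity

section Wirtinger

variable {n : ℕ} {z : Cn n} {j : Fin n} {f g : Cn n → ℂ}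

theorem HasFDerivAt.wder_eq {L : Cn n →L[ℝ] ℂ} (h : HasFDerivAt f L z) :
    wder j f z = (L (sdir j) - I * L (I • sdir j)) / 2 := by
  rw [wder, h.fderiv]

theorem HasFDerivAt.wbar_eq {L : Cn n →L[ℝ] ℂ} (h : HasFDerivAt f L z) :
    wbar j f z = (L (sdir j) + I * L (I • sdir j)) / 2 := by
  rw [wbar, h.fderiv]

theorem Filter.EventuallyEq.wder_eq (h : f =ᶠ[𝓝 z] g) : wder j f z = wder j g z := by
  rw [wder, wder, h.fderiv_eq]

theorem DifferentiableAt.wder_eq_fderiv (hf : DifferentiableAt ℂ f z) :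
    wder j f z = fderiv ℂ f z (sdir j) := by
  rw [(hf.hasFDerivAt.restrictScalars ℝ).wder_eq]
  simp only [ContinuousLinearMap.coe_restrictScalars', map_smul, smul_eq_mul]
  linear_combination (-fderiv ℂ f z (sdir j) / 2) * I_mul_I

theorem DifferentiableAt.wbar_eq_zero (hf : DifferentiableAt ℂ f z) : wbar j f z = 0 := by
  rw [(hf.hasFDerivAt.restrictScalars ℝ).wbar_eq]
  simp only [ContinuousLinearMap.coe_restrictScalars', map_smul, smul_eq_mul]
  linear_combination (fderiv ℂ f z (sdir j) / 2) * I_mul_I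

theorem differentiableAt_wder {U : Set (Cn n)} (hf : DifferentiableOn ℂ f U) (hU : IsOpen U)
    (hz : z ∈ U) : DifferentiableAt ℂ (wder j f) z :=
  (hf.differentiableAt_fderiv_apply hU hz (sdir j)).congr_of_eventuallyEq <|
    Filter.eventually_of_mem (hU.mem_nhds hz) fun _ hw =>
      (hf.differentiableAt (hU.mem_nhds hw)).wder_eq_fderiv

theorem hasFDerivAt_conj (hf : DifferentiableAt ℝ f z) :
    HasFDerivAt (fun w => conj (f w)) (conjCLE.toContinuousLinearMap.comp (fderiv ℝ f z)) z :=
  conjCLE.toContinuousLinearMap.hasFDerivAt.comp z hf.hasFDerivAt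

theorem DifferentiableAt.conj (hf : DifferentiableAt ℝ f z) :
    DifferentiableAt ℝ (fun w => conj (f w)) z :=
  hf.star

theorem wder_conj (hf : DifferentiableAt ℝ f z) :
    wder j (fun w => conj (f w)) z = conj (wbar j f z) := by
  rw [(hasFDerivAt_conj hf).wder_eq, wbar]
  simp only [ContinuousLinearMap.comp_apply, ContinuousLinearEquiv.coe_coe,
    conjCLE_apply, map_div₀, map_add, map_mul, conj_I, map_ofNat]
  ring

theorem wbar_conj (hf : DifferentiableAt ℝ f z) :
    wbar j (fun w => conj (f w)) z = conj (wder j f z) := by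
  rw [(hasFDerivAt_conj hf).wbar_eq, wder]
  simp only [ContinuousLinearMap.comp_apply, ContinuousLinearEquiv.coe_coe,
    conjCLE_apply, map_div₀, map_sub, map_mul, conj_I, map_ofNat]
  ring

theorem wder_mul (hf : DifferentiableAt ℝ f z) (hg : DifferentiableAt ℝ g z) :
    wder j (fun w => f w * g w) z = wder j f z * g z + f z * wder j g z := by
  rw [(hf.hasFDerivAt.fun_mul hg.hasFDerivAt).wder_eq, hf.hasFDerivAt.wder_eq,
    hg.hasFDerivAt.wder_eq]
  simp only [add_apply, smul_apply, smul_eq_mul]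
  ring

theorem wbar_mul (hf : DifferentiableAt ℝ f z) (hg : DifferentiableAt ℝ g z) :
    wbar j (fun w => f w * g w) z = wbar j f z * g z + f z * wbar j g z := by
  rw [(hf.hasFDerivAt.fun_mul hg.hasFDerivAt).wbar_eq, hf.hasFDerivAt.wbar_eq,
    hg.hasFDerivAt.wbar_eq]
  simp only [add_apply, smul_apply, smul_eq_mul]
  ring

theorem wder_inv (hf : DifferentiableAt ℝ f z) (h0 : f z ≠ 0) :
    wder j (fun w => (f w)⁻¹) z = -wder j f z / f z ^ 2 := by
  have hinv := ((hasDerivAt_inv h0).hasFDerivAt.restrictScalars ℝ).comp z hf.hasFDerivAt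
  rw [Function.comp_def] at hinv
  rw [hinv.wder_eq, hf.hasFDerivAt.wder_eq]
  simp only [ContinuousLinearMap.comp_apply, ContinuousLinearMap.coe_restrictScalars',
    ContinuousLinearMap.toSpanSingleton_apply, smul_eq_mul]
  ring

theorem wbar_inv (hf : DifferentiableAt ℝ f z) (h0 : f z ≠ 0) :
    wbar j (fun w => (f w)⁻¹) z = -wbar j f z / f z ^ 2 := by
  have hinv := ((hasDerivAt_inv h0).hasFDerivAt.restrictScalars ℝ).comp z hf.hasFDerivAt
  rw [Function.comp_def] at hinv
  rw [hinv.wbar_eq, hf.hasFDerivAt.wbar_eq]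
  simp only [ContinuousLinearMap.comp_apply, ContinuousLinearMap.coe_restrictScalars',
    ContinuousLinearMap.toSpanSingleton_apply, smul_eq_mul]
  ring

theorem wder_sum {ι : Type*} (s : Finset ι) {F : ι → Cn n → ℂ}
    (hF : ∀ i ∈ s, DifferentiableAt ℝ (F i) z) :
    wder j (fun w => ∑ i ∈ s, F i w) z = ∑ i ∈ s, wder j (F i) z := by
  rw [(HasFDerivAt.fun_sum fun i hi => (hF i hi).hasFDerivAt).wder_eq]
  simp only [FunLike.coe_sum, Finset.sum_apply, wder, Finset.mul_sum,
    ← Finset.sum_sub_distrib, Finset.sum_div]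

theorem wbar_sum {ι : Type*} (s : Finset ι) {F : ι → Cn n → ℂ}
    (hF : ∀ i ∈ s, DifferentiableAt ℝ (F i) z) :
    wbar j (fun w => ∑ i ∈ s, F i w) z = ∑ i ∈ s, wbar j (F i) z := by
  rw [(HasFDerivAt.fun_sum fun i hi => (hF i hi).hasFDerivAt).wbar_eq]
  simp only [FunLike.coe_sum, Finset.sum_apply, wbar, Finset.mul_sum,
    ← Finset.sum_add_distrib, Finset.sum_div]

end Wirtinger

theorem norm_sum_mul_conj_sq_le {ι : Type*} (s : Finset ι) (a b : ι → ℂ) :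
    ‖∑ i ∈ s, a i * conj (b i)‖ ^ 2 ≤ (∑ i ∈ s, ‖a i‖ ^ 2) * ∑ i ∈ s, ‖b i‖ ^ 2 := by
  have htri : ‖∑ i ∈ s, a i * conj (b i)‖ ≤ ∑ i ∈ s, ‖a i‖ * ‖b i‖ :=
    (norm_sum_le _ _).trans_eq (by simp only [norm_mul, RCLike.norm_conj])
  exact (pow_le_pow_left₀ (norm_nonneg _) htri 2).trans (Finset.sum_mul_sq_le_sq_mul_sq _ _ _)

def weightBound (δ₀ M : ℝ) : ℝ := 3 * (M / δ₀ ^ 4 + 4 * M ^ 2 / δ₀ ^ 6 + 1 / δ₀ ^ 4)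

theorem norm_sq_weight_deriv_le {a b G dG H dH : ℂ} {δ₀ M Sa Sg : ℝ} (hδ₀ : 0 < δ₀)
    (hH : δ₀ ≤ ‖H‖) (hG : ‖G‖ ^ 2 ≤ M) (ha : ‖a‖ ^ 2 ≤ Sa) (hdG : ‖dG‖ ^ 2 ≤ Sg)
    (hdH : ‖dH‖ ^ 2 ≤ M * Sg) :
    ‖(a * G + b * dG) / H ^ 2 - 2 * b * G * dH / H ^ 3‖ ^ 2
      ≤ weightBound δ₀ M * (Sa + ‖b‖ ^ 2 * Sg) := by
  have hM : 0 ≤ M := (sq_nonneg _).trans hG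
  have hSa : 0 ≤ Sa := (sq_nonneg _).trans ha
  have hSg : 0 ≤ Sg := (sq_nonneg _).trans hdG
  have hH0 : 0 < ‖H‖ := hδ₀.trans_le hH
  set x := ‖a * G / H ^ 2‖
  set y := ‖b * dG / H ^ 2‖
  set t := ‖2 * b * G * dH / H ^ 3‖
  have hx : x ^ 2 ≤ Sa * M / δ₀ ^ 4 := by
    simp only [x, norm_div, norm_mul, norm_pow, div_pow, mul_pow, ← pow_mul]
    gcongr
  have hy : y ^ 2 ≤ ‖b‖ ^ 2 * Sg / δ₀ ^ 4 := by
    simp only [y, norm_div, norm_mul, norm_pow, div_pow, mul_pow, ← pow_mul]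
    gcongr
  have ht : t ^ 2 ≤ 2 ^ 2 * ‖b‖ ^ 2 * M * (M * Sg) / δ₀ ^ 6 := by
    simp only [t, norm_div, norm_mul, norm_pow, div_pow, mul_pow, ← pow_mul, Complex.norm_ofNat]
    gcongr
  have htri : ‖(a * G + b * dG) / H ^ 2 - 2 * b * G * dH / H ^ 3‖ ≤ x + y + t := by
    rw [add_div]
    exact (norm_sub_le _ _).trans (by gcongr; exact norm_add_le _ _)
  have hsq : (x + y + t) ^ 2 ≤ 3 * (x ^ 2 + y ^ 2 + t ^ 2) := by
    nlinarith [sq_nonneg (x - y), sq_nonneg (y - t), sq_nonneg (x - t)]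
  calc _ ≤ (x + y + t) ^ 2 := pow_le_pow_left₀ (norm_nonneg _) htri 2
    _ ≤ 3 * (x ^ 2 + y ^ 2 + t ^ 2) := hsq
    _ ≤ 3 * (Sa * M / δ₀ ^ 4 + ‖b‖ ^ 2 * Sg / δ₀ ^ 4 + 2 ^ 2 * ‖b‖ ^ 2 * M * (M * Sg) / δ₀ ^ 6
          + (‖b‖ ^ 2 * Sg * M / δ₀ ^ 4 + 4 * M ^ 2 * Sa / δ₀ ^ 6 + Sa / δ₀ ^ 4)) := by
      have : 0 ≤ ‖b‖ ^ 2 * Sg * M / δ₀ ^ 4 + 4 * M ^ 2 * Sa / δ₀ ^ 6 + Sa / δ₀ ^ 4 := by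
        positivity
      linarith
    _ = _ := by rw [weightBound]; ring

section Coefficients

variable {n m : ℕ} {g : Fin m → Cn n → ℂ} {f : Cn n → ℂ} {z : Cn n}

def tupleNormSq (g : Fin m → Cn n → ℂ) (w : Cn n) : ℂ := ((∑ i, ‖g i w‖ ^ 2 : ℝ) : ℂ)

def crossDeriv (g : Fin m → Cn n → ℂ) (i k : Fin m) (μ : Fin n) (w : Cn n) : ℂ :=
  g i w * wder μ (g k) w - g k w * wder μ (g i) w

def vCoeff (f : Cn n → ℂ) (g : Fin m → Cn n → ℂ) (k : Fin m) (μ : Fin n) (w : Cn n) : ℂ :=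
  f w * wbar μ (fun w' => conj (g k w') / tupleNormSq g w') w

def vWeight (f : Cn n → ℂ) (g : Fin m → Cn n → ℂ) (i : Fin m) (w : Cn n) : ℂ :=
  f w * g i w / tupleNormSq g w ^ 2

theorem tupleNormSq_eq_sum_mul_conj :
    tupleNormSq g = fun w => ∑ i, g i w * conj (g i w) := by
  ext w
  simp only [tupleNormSq, ofReal_sum, mul_conj, normSq_eq_norm_sq, Complex.ofReal_pow]

theorem norm_tupleNormSq (w : Cn n) : ‖tupleNormSq g w‖ = ∑ i, ‖g i w‖ ^ 2 := by
  rw [tupleNormSq, norm_real, Real.norm_of_nonneg (by positivity)]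

variable {j : Fin n}

theorem differentiableAt_tupleNormSq (hg : ∀ i, DifferentiableAt ℝ (g i) z) :
    DifferentiableAt ℝ (tupleNormSq g) z := by
  rw [tupleNormSq_eq_sum_mul_conj]
  exact DifferentiableAt.fun_sum fun i _ => (hg i).fun_mul (hg i).conj

theorem wder_tupleNormSq (hg : ∀ i, DifferentiableAt ℂ (g i) z) :
    wder j (tupleNormSq g) z = ∑ i, wder j (g i) z * conj (g i z) := by
  have hgR i := (hg i).restrictScalars ℝ
  rw [tupleNormSq_eq_sum_mul_conj, wder_sum _ fun i _ => (hgR i).fun_mul (hgR i).conj]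
  refine Finset.sum_congr rfl fun i _ => ?_
  rw [wder_mul (hgR i) (hgR i).conj, wder_conj (hgR i),
    (hg i).wbar_eq_zero, map_zero, mul_zero, add_zero]

theorem wbar_tupleNormSq (hg : ∀ i, DifferentiableAt ℂ (g i) z) :
    wbar j (tupleNormSq g) z = ∑ i, g i z * conj (wder j (g i) z) := by
  have hgR i := (hg i).restrictScalars ℝ
  rw [tupleNormSq_eq_sum_mul_conj, wbar_sum _ fun i _ => (hgR i).fun_mul (hgR i).conj]
  refine Finset.sum_congr rfl fun i _ => ?_
  rw [wbar_mul (hgR i) (hgR i).conj, wbar_conj (hgR i),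
    (hg i).wbar_eq_zero, zero_mul, zero_add]

theorem differentiableAt_vWeight (hf : DifferentiableAt ℝ f z)
    (hg : ∀ i, DifferentiableAt ℝ (g i) z) (hH : tupleNormSq g z ≠ 0) (i : Fin m) :
    DifferentiableAt ℝ (vWeight f g i) z := by
  unfold vWeight
  simp only [div_eq_mul_inv]
  exact (hf.fun_mul (hg i)).fun_mul
    (((differentiableAt_tupleNormSq hg).fun_pow 2).fun_inv (pow_ne_zero 2 hH))

theorem differentiableAt_crossDeriv {U : Set (Cn n)} (hU : IsOpen U)
    (hg : ∀ i, DifferentiableOn ℂ (g i) U) (hz : z ∈ U) (i k : Fin m) (μ : Fin n) :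
    DifferentiableAt ℂ (crossDeriv g i k μ) z := by
  have hgz l := (hg l).differentiableAt (hU.mem_nhds hz)
  exact ((hgz i).fun_mul (differentiableAt_wder (hg k) hU hz)).fun_sub
    ((hgz k).fun_mul (differentiableAt_wder (hg i) hU hz))

theorem wbar_conj_div_tupleNormSq {k : Fin m} {w : Cn n} (hg : ∀ i, DifferentiableAt ℂ (g i) w)
    (hH : tupleNormSq g w ≠ 0) :
    wbar j (fun w' => conj (g k w') / tupleNormSq g w') w
      = ∑ i, g i w / tupleNormSq g w ^ 2 * conj (crossDeriv g i k j w) := by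
  have hgR i := (hg i).restrictScalars ℝ
  have hHR := differentiableAt_tupleNormSq hgR
  have hquot : (fun w' => conj (g k w') / tupleNormSq g w')
      = fun w' => conj (g k w') * (tupleNormSq g w')⁻¹ := by
    simp only [div_eq_mul_inv]
  have hsum : ∑ i, g i w / tupleNormSq g w ^ 2 * conj (crossDeriv g i k j w)
      = (∑ i, g i w * conj (g i w)) * conj (wder j (g k) w) / tupleNormSq g w ^ 2
        - conj (g k w) * (∑ i, g i w * conj (wder j (g i) w)) / tupleNormSq g w ^ 2 := by
    simp only [Finset.sum_mul, Finset.mul_sum, Finset.sum_div, ← Finset.sum_sub_distrib]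
    refine Finset.sum_congr rfl fun i _ => ?_
    simp only [crossDeriv, map_sub, map_mul]
    ring
  rw [hquot, wbar_mul (hgR k).conj (hHR.fun_inv hH), wbar_conj (hgR k), wbar_inv hHR hH,
    wbar_tupleNormSq hg, hsum, ← congrFun tupleNormSq_eq_sum_mul_conj w]
  field_simp
  ring

theorem vCoeff_eq_sum {k : Fin m} {μ : Fin n} {w : Cn n} (hg : ∀ i, DifferentiableAt ℂ (g i) w)
    (hH : tupleNormSq g w ≠ 0) :
    vCoeff f g k μ w = ∑ i, vWeight f g i w * conj (crossDeriv g i k μ w) := by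
  rw [vCoeff, wbar_conj_div_tupleNormSq hg hH, Finset.mul_sum]
  exact Finset.sum_congr rfl fun i _ => by rw [vWeight]; ring

theorem wder_vCoeff {U : Set (Cn n)} (hU : IsOpen U) (hg : ∀ i, DifferentiableOn ℂ (g i) U)
    (hH : ∀ w ∈ U, tupleNormSq g w ≠ 0) (hf : DifferentiableAt ℂ f z) (hz : z ∈ U)
    (k : Fin m) (ν μ : Fin n) :
    wder ν (vCoeff f g k μ) z
      = ∑ i, wder ν (vWeight f g i) z * conj (crossDeriv g i k μ z) := by
  have hgU : ∀ w ∈ U, ∀ i, DifferentiableAt ℂ (g i) w := fun w hw i =>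
    (hg i).differentiableAt (hU.mem_nhds hw)
  have hW i := differentiableAt_vWeight (hf.restrictScalars ℝ)
    (fun l => (hgU z hz l).restrictScalars ℝ) (hH z hz) i
  have hX i := differentiableAt_crossDeriv hU hg hz i k μ
  have hexpand :
      vCoeff f g k μ =ᶠ[𝓝 z] fun w => ∑ i, vWeight f g i w * conj (crossDeriv g i k μ w) :=
    Filter.eventually_of_mem (hU.mem_nhds hz) fun w hw => vCoeff_eq_sum (hgU w hw) (hH w hw)
  rw [hexpand.wder_eq, wder_sum _ fun i _ => (hW i).fun_mul ((hX i).restrictScalars ℝ).conj]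
  refine Finset.sum_congr rfl fun i _ => ?_
  rw [wder_mul (hW i) ((hX i).restrictScalars ℝ).conj, wder_conj ((hX i).restrictScalars ℝ),
    (hX i).wbar_eq_zero, map_zero, mul_zero, add_zero]

theorem wder_vWeight (hf : DifferentiableAt ℂ f z) (hg : ∀ i, DifferentiableAt ℂ (g i) z)
    (hH : tupleNormSq g z ≠ 0) (i : Fin m) :
    wder j (vWeight f g i) z
      = (wder j f z * g i z + f z * wder j (g i) z) / tupleNormSq g z ^ 2
        - 2 * f z * g i z * (∑ l, wder j (g l) z * conj (g l z)) / tupleNormSq g z ^ 3 := by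
  have hfR := hf.restrictScalars ℝ
  have hgR l := (hg l).restrictScalars ℝ
  have hHR := differentiableAt_tupleNormSq hgR
  have hprod : vWeight f g i
      = fun w => f w * g i w * ((tupleNormSq g w)⁻¹ * (tupleNormSq g w)⁻¹) := by
    ext w
    rw [vWeight]
    ring
  rw [hprod, wder_mul (hfR.fun_mul (hgR i)) ((hHR.fun_inv hH).fun_mul (hHR.fun_inv hH)),
    wder_mul hfR (hgR i), wder_mul (hHR.fun_inv hH) (hHR.fun_inv hH), wder_inv hHR hH,
    wder_tupleNormSq hg]
  field_simp
  ring

theorem norm_sq_wder_vWeight_le {δ₀ M : ℝ} (hδ₀ : 0 < δ₀) (hf : DifferentiableAt ℂ f z)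
    (hg : ∀ i, DifferentiableAt ℂ (g i) z) (hlow : δ₀ ≤ ∑ i, ‖g i z‖ ^ 2)
    (hupp : ∑ i, ‖g i z‖ ^ 2 ≤ M) (i : Fin m) :
    ‖wder j (vWeight f g i) z‖ ^ 2 ≤ weightBound δ₀ M *
      ((∑ μ, ‖wder μ f z‖ ^ 2) + ‖f z‖ ^ 2 * ∑ l, ∑ μ, ‖wder μ (g l) z‖ ^ 2) := by
  have hH : δ₀ ≤ ‖tupleNormSq g z‖ := by rwa [norm_tupleNormSq]
  have hdg l : ‖wder j (g l) z‖ ^ 2 ≤ ∑ μ, ‖wder μ (g l) z‖ ^ 2 :=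
    Finset.single_le_sum (f := fun μ => ‖wder μ (g l) z‖ ^ 2) (fun _ _ => by positivity)
      (Finset.mem_univ j)
  rw [wder_vWeight hf hg (norm_pos_iff.mp (hδ₀.trans_le hH)) i]
  refine norm_sq_weight_deriv_le hδ₀ hH ?_ ?_ ((hdg i).trans ?_) ?_
  · exact (Finset.single_le_sum (f := fun l => ‖g l z‖ ^ 2) (fun _ _ => by positivity)
      (Finset.mem_univ i)).trans hupp
  · exact Finset.single_le_sum (f := fun μ => ‖wder μ f z‖ ^ 2) (fun _ _ => by positivity)
      (Finset.mem_univ j)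
  · exact Finset.single_le_sum (f := fun l => ∑ μ, ‖wder μ (g l) z‖ ^ 2)
      (fun _ _ => by positivity) (Finset.mem_univ i)
  · refine (norm_sum_mul_conj_sq_le _ _ _).trans ?_
    rw [mul_comm]
    exact mul_le_mul hupp (Finset.sum_le_sum fun l _ => hdg l) (by positivity)
      ((by positivity : (0 : ℝ) ≤ ∑ l, ‖g l z‖ ^ 2).trans hupp)

theorem norm_sq_sum_wder_vCoeff_mul_le {U : Set (Cn n)} {δ₀ M : ℝ} (hδ₀ : 0 < δ₀) (hU : IsOpen U)
    (hg : ∀ i, DifferentiableOn ℂ (g i) U) (hlow : ∀ w ∈ U, δ₀ ≤ ∑ i, ‖g i w‖ ^ 2)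
    (hupp : ∑ i, ‖g i z‖ ^ 2 ≤ M) (hf : DifferentiableAt ℂ f z) (hz : z ∈ U) (k : Fin m)
    (ν : Fin n) (ξ : Fin n → ℂ) :
    ‖∑ μ, wder ν (vCoeff f g k μ) z * ξ μ‖ ^ 2
      ≤ m * weightBound δ₀ M *
        ((∑ μ, ‖wder μ f z‖ ^ 2) + ‖f z‖ ^ 2 * ∑ i, ∑ μ, ‖wder μ (g i) z‖ ^ 2) *
        ∑ i, ‖∑ μ, crossDeriv g i k μ z * conj (ξ μ)‖ ^ 2 := by
  have hH : ∀ w ∈ U, tupleNormSq g w ≠ 0 := fun w hw => by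
    rw [← norm_ne_zero_iff, norm_tupleNormSq]
    exact (hδ₀.trans_le (hlow w hw)).ne'
  have hgz i := (hg i).differentiableAt (hU.mem_nhds hz)
  have hsum : ∑ μ, wder ν (vCoeff f g k μ) z * ξ μ
      = ∑ i, wder ν (vWeight f g i) z * conj (∑ μ, crossDeriv g i k μ z * conj (ξ μ)) := by
    simp only [wder_vCoeff hU hg hH hf hz, map_sum, map_mul, conj_conj, Finset.sum_mul,
      Finset.mul_sum]
    rw [Finset.sum_comm]
    exact Finset.sum_congr rfl fun i _ => Finset.sum_congr rfl fun μ _ => by ring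
  have hweights : ∑ i, ‖wder ν (vWeight f g i) z‖ ^ 2
      ≤ m * (weightBound δ₀ M *
        ((∑ μ, ‖wder μ f z‖ ^ 2) + ‖f z‖ ^ 2 * ∑ i, ∑ μ, ‖wder μ (g i) z‖ ^ 2)) := by
    simpa using Finset.sum_le_card_nsmul Finset.univ _ _ fun i _ =>
      norm_sq_wder_vWeight_le hδ₀ hf hgz (hlow z hz) hupp i
  rw [hsum, mul_assoc (m : ℝ)]
  exact (norm_sum_mul_conj_sq_le _ _ _).trans
    (mul_le_mul_of_nonneg_right hweights (by positivity))

end Coefficients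

/-- **Derivative bound (4.6)/(4.7)**. With `v_{kμ} = f ∂(ḡ_k/|g|²)/∂z̄_μ` and
`δ₀ ≤ |g|² ≤ M`, there is `C = C(m, δ₀, M)` such that
`|Σ_μ (∂v_{kμ}/∂z_ν) ξ_μ|² ≤ C (|∂f|² + |f|²|∂g|²) Σ_j |Σ_μ (g_j∂g_k/∂z_μ - g_k∂g_j/∂z_μ) ξ̄_μ|²`. -/
theorem v_derivative_bound (m : ℕ) (δ₀ M : ℝ) (hδ₀ : 0 < δ₀) (hδM : δ₀ ≤ M) :
    ∃ C : ℝ, 0 < C ∧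
      ∀ (n : ℕ) (U : Set (Cn n)), IsOpen U →
      ∀ g : Fin m → Cn n → ℂ, (∀ k, DifferentiableOn ℂ (g k) U) →
      (∀ z ∈ U, δ₀ ≤ ∑ k, ‖g k z‖ ^ 2) → (∀ z ∈ U, ∑ k, ‖g k z‖ ^ 2 ≤ M) →
      ∀ f : Cn n → ℂ, DifferentiableOn ℂ f U →
      ∀ z ∈ U, ∀ (k : Fin m) (ν : Fin n) (ξ : Fin n → ℂ),
        ‖∑ μ, wder ν (fun w => f w * wbar μ
            (fun w' => (starRingEnd ℂ) (g k w') / ((∑ i, ‖g i w'‖ ^ 2 : ℝ) : ℂ)) w) z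
          * ξ μ‖ ^ 2
        ≤ C * ((∑ μ, ‖wder μ f z‖ ^ 2) + ‖f z‖ ^ 2 * ∑ i, ∑ μ, ‖wder μ (g i) z‖ ^ 2) *
          ∑ j, ‖∑ μ, (g j z * wder μ (g k) z - g k z * wder μ (g j) z)
            * (starRingEnd ℂ) (ξ μ)‖ ^ 2 := by
  have hC₀ : 0 < weightBound δ₀ M := by
    have hM : 0 < M := hδ₀.trans_le hδM
    rw [weightBound]
    positivity
  refine ⟨(m + 1) * weightBound δ₀ M, by positivity, ?_⟩
  intro n U hU g hg hlow hupp f hf z hz k ν ξ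
  refine (norm_sq_sum_wder_vCoeff_mul_le hδ₀ hU hg hlow (hupp z hz)
    (hf.differentiableAt (hU.mem_nhds hz)) hz k ν ξ).trans ?_
  gcongr ?_ * _ * _
  linarith
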